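/- Let σ be an edge-coloring of an ordered complete graph that is a (3,2)-coloring, and let x1 < x2 < x3 < x4 be elements of {0,1}^n with γ_i = γ(x_i, x_{i+1}) satisfying γ_1 < γ_2 and γ_3 < γ_2 and γ_4 < γ_3 (where γ_4 = γ(x_4, x_5) for a fifth vertex x_5 > x_4). Then among the triples x_2x_3x_4, x_2x_3x_5, x_2x_4x_5, x_3x_4x_5, the coloring χ(uvw) = (σ(γ(u,v)γ(v,w)), δ(u,v,w)) takes at least two distinct values, each with δ-coordinate −1. -/

import Mathlib

/-! Since `γ(x₄,x₅) < γ(x₃,x₄) < γ(x₂,x₃)`, the first differences compose: `γ(x₃,x₅) = γ(x₄,x₅)`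
and `γ(x₂,x₄) = γ(x₃,x₄)`. Hence the triples `x₂x₃x₄`, `x₂x₃x₅`, `x₂x₄x₅` all have `δ = -1` and
σ-coordinates the three edges of the triangle `{γ(x₄,x₅), γ(x₃,x₄), γ(x₂,x₃)}`, which by the
(3,2)-property are not all equal. -/

/-- Binary order on `{0,1}^n` (coordinate 0 most significant). -/
def binLT {n : ℕ} (x y : Fin n → Bool) : Prop :=
  ∃ i : Fin n, x i = false ∧ y i = true ∧ ∀ j < i, x j = y j

/-- `gamma x y` : the first coordinate where `x` and `y` differ (as a natural number). -/
noncomputable def gamma {n : ℕ} (x y : Fin n → Bool) : ℕ :=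
  sInf {i | ∃ h : i < n, x ⟨i, h⟩ ≠ y ⟨i, h⟩}

/-- The stepped-up coloring `χ(uvw) = (σ(γ(u,v) γ(v,w)), δ(u,v,w))` for `u < v < w`. -/
noncomputable def chi {n : ℕ} {C : Type*} (σ : ℕ → ℕ → C) (u v w : Fin n → Bool) :
    C × ℤ :=
  (σ (gamma u v) (gamma v w), if gamma u v < gamma v w then 1 else -1)

section Gamma

variable {n : ℕ} {x y z : Fin n → Bool}

theorem binLT.ne (h : binLT x y) : x ≠ y := by
  obtain ⟨i, hx, hy, -⟩ := h
  rintro rfl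
  simp_all

theorem eq_of_lt_gamma {i : Fin n} (hi : (i : ℕ) < gamma x y) : x i = y i := by
  by_contra hne
  exact Nat.notMem_of_lt_sInf hi ⟨i.2, hne⟩

theorem gamma_spec (hxy : x ≠ y) :
    ∃ h : gamma x y < n, x ⟨gamma x y, h⟩ ≠ y ⟨gamma x y, h⟩ := by
  obtain ⟨i, hi⟩ := Function.ne_iff.mp hxy
  exact Nat.sInf_mem (s := {i | ∃ h : i < n, x ⟨i, h⟩ ≠ y ⟨i, h⟩}) ⟨i, i.2, hi⟩

theorem gamma_eq_of_gamma_lt (hyz : y ≠ z) (h : gamma y z < gamma x y) :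
    gamma x z = gamma y z := by
  obtain ⟨hn, hne⟩ := gamma_spec hyz
  have hmem : gamma y z ∈ {i | ∃ h : i < n, x ⟨i, h⟩ ≠ z ⟨i, h⟩} :=
    ⟨hn, eq_of_lt_gamma (i := ⟨_, hn⟩) h ▸ hne⟩
  refine le_antisymm (Nat.sInf_le hmem) (le_csInf ⟨_, hmem⟩ ?_)
  rintro i ⟨hi, hxz⟩
  by_contra! hlt
  exact hxz ((eq_of_lt_gamma (i := ⟨i, hi⟩) (hlt.trans h)).trans
    (eq_of_lt_gamma (i := ⟨i, hi⟩) hlt))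

end Gamma

theorem chi_of_gamma_lt {n : ℕ} {C : Type*} (σ : ℕ → ℕ → C) {u v w : Fin n → Bool}
    (h : gamma v w < gamma u v) : chi σ u v w = (σ (gamma u v) (gamma v w), -1) := by
  simp [chi, h.not_gt]

theorem triangle_two_colors {C : Type*} {σ : ℕ → ℕ → C} (hsym : ∀ a b, σ a b = σ b a)
    (h32 : ∀ a b c : ℕ, a < b → b < c → ¬(σ a b = σ a c ∧ σ a c = σ b c))
    {a b c : ℕ} (hab : a < b) (hbc : b < c) : σ c b ≠ σ c a ∨ σ c a ≠ σ b a := by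
  have h := h32 a b c hab hbc
  rw [hsym a b, hsym a c, hsym b c] at h
  tauto

theorem stmt_13_general {n : ℕ} {C : Type*} [DecidableEq C] (σ : ℕ → ℕ → C)
    (hsym : ∀ a b, σ a b = σ b a)
    (h32 : ∀ a b c : ℕ, a < b → b < c → ¬(σ a b = σ a c ∧ σ a c = σ b c))
    (x₂ x₃ x₄ x₅ : Fin n → Bool)
    (h34 : binLT x₃ x₄) (h45 : binLT x₄ x₅)
    (hg32 : gamma x₃ x₄ < gamma x₂ x₃)
    (hg43 : gamma x₄ x₅ < gamma x₃ x₄) :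
    ∃ c₁ c₂ : C × ℤ,
      c₁ ∈ ({chi σ x₂ x₃ x₄, chi σ x₂ x₃ x₅, chi σ x₂ x₄ x₅, chi σ x₃ x₄ x₅} :
        Finset (C × ℤ)) ∧
      c₂ ∈ ({chi σ x₂ x₃ x₄, chi σ x₂ x₃ x₅, chi σ x₂ x₄ x₅, chi σ x₃ x₄ x₅} :
        Finset (C × ℤ)) ∧
      c₁ ≠ c₂ ∧ c₁.2 = -1 ∧ c₂.2 = -1 := by
  have g35 : gamma x₃ x₅ = gamma x₄ x₅ := gamma_eq_of_gamma_lt h45.ne hg43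
  have g24 : gamma x₂ x₄ = gamma x₃ x₄ := gamma_eq_of_gamma_lt h34.ne hg32
  have e234 := chi_of_gamma_lt σ hg32
  have e235 := chi_of_gamma_lt σ (g35 ▸ hg43.trans hg32)
  have e245 := chi_of_gamma_lt σ (g24 ▸ hg43)
  rw [g35] at e235
  rw [g24] at e245
  rcases triangle_two_colors hsym h32 hg43 hg32 with hne | hne
  · refine ⟨chi σ x₂ x₃ x₄, chi σ x₂ x₃ x₅, by simp, by simp, ?_⟩
    simp [e234, e235, hne]
  · refine ⟨chi σ x₂ x₃ x₅, chi σ x₂ x₄ x₅, by simp, by simp, ?_⟩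
    simp [e235, e245, hne]

theorem stmt_13 {n : ℕ} {C : Type*} [DecidableEq C] (σ : ℕ → ℕ → C)
    (hsym : ∀ a b, σ a b = σ b a)
    (h32 : ∀ a b c : ℕ, a < b → b < c → ¬(σ a b = σ a c ∧ σ a c = σ b c))
    (x₁ x₂ x₃ x₄ x₅ : Fin n → Bool)
    (h12 : binLT x₁ x₂) (h23 : binLT x₂ x₃) (h34 : binLT x₃ x₄) (h45 : binLT x₄ x₅)
    (hg12 : gamma x₁ x₂ < gamma x₂ x₃)
    (hg32 : gamma x₃ x₄ < gamma x₂ x₃)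
    (hg43 : gamma x₄ x₅ < gamma x₃ x₄) :
    ∃ c₁ c₂ : C × ℤ,
      c₁ ∈ ({chi σ x₂ x₃ x₄, chi σ x₂ x₃ x₅, chi σ x₂ x₄ x₅, chi σ x₃ x₄ x₅} :
        Finset (C × ℤ)) ∧
      c₂ ∈ ({chi σ x₂ x₃ x₄, chi σ x₂ x₃ x₅, chi σ x₂ x₄ x₅, chi σ x₃ x₄ x₅} :
        Finset (C × ℤ)) ∧
      c₁ ≠ c₂ ∧ c₁.2 = -1 ∧ c₂.2 = -1 :=
  stmt_13_general σ hsym h32 x₂ x₃ x₄ x₅ h34 h45 hg32 hg43
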